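/- In ℂ[G_{p,n}] define Θ_i := Σ_{σ : d(σ^{−1}) = i} σ for i = 0,…,ℓ, and e_{ℓ−k} := Σ_{i=0}^{ℓ} u_{ik} Θ_i for k = 0,…,ℓ. Then: (1) the polynomial identity Σ_{i=0}^{ℓ} binom(n + (x−1)/p − i, n) Θ_i = Σ_{k=0}^{ℓ} x^{n−k} e_{ℓ−k} holds (as an identity of polynomials in x with coefficients in ℂ[G_{p,n}]); and (2) Θ_i = Σ_{k=0}^{ℓ} v_{ki} e_{ℓ−k} for each i = 0,…,ℓ. -/

import Mathlib

open scoped Classical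

noncomputable section

/-- The colored permutation group `G_{p,n}`: an element is determined by its permutation
part `σ(·)` and its colors `σ_c(·)`. -/
def GPN (p n : ℕ) : Type := Equiv.Perm (Fin n) × (Fin n → ZMod p)

namespace GPN

variable {p n : ℕ}

/-- Group law coming from composition of the corresponding bijections of
`{1,…,n} × Z_p`: `(μτ)(i) = μ(τ(i))` and `(μτ)_c(i) = μ_c(τ(i)) + τ_c(i)`. -/
instance : Group (GPN p n) where
  mul a b := (a.1 * b.1, fun i => a.2 (b.1 i) + b.2 i)
  one := (1, fun _ => 0)
  inv a := (a.1⁻¹, fun i => -a.2 (a.1⁻¹ i))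
  mul_assoc a b c := Prod.ext (mul_assoc _ _ _) (funext fun i => add_assoc _ _ _)
  one_mul a := Prod.ext (one_mul _) (funext fun i => zero_add _)
  mul_one a := Prod.ext (mul_one _) (funext fun i => add_zero _)
  inv_mul_cancel a := Prod.ext (inv_mul_cancel _)
    (funext fun i => by
      show -a.2 (a.1⁻¹ (a.1 i)) + a.2 i = 0
      rw [show a.1⁻¹ (a.1 i) = i from Equiv.symm_apply_apply a.1 i]
      exact neg_add_cancel _)

instance [NeZero p] : Fintype (GPN p n) := by unfold GPN; infer_instance

instance : DecidableEq (GPN p n) := by unfold GPN; infer_instance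

end GPN

/-- Rank of a color `r ∈ Z_p` in the order `0, p-1, p-2, …, 1` used to define
the linear order on `Σ = {1,…,n} × Z_p`. -/
def rho (p : ℕ) (r : ZMod p) : ℕ := if r = 0 then 0 else p - r.val

/-- The linear order on `Σ`: `(i,r) < (j,s)` iff the color of `r` comes strictly earlier
(in the order `0, p-1, …, 1`), or the colors agree and `i < j`. -/
def sigmaLt (p : ℕ) (x y : ℕ × ZMod p) : Prop :=
  rho p x.2 < rho p y.2 ∨ (rho p x.2 = rho p y.2 ∧ x.1 < y.1)

/-- The pair `(σ(i), σ_c(i)) ∈ {1,…,n} × Z_p`. -/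
def gpnPair {p n : ℕ} (σ : GPN p n) (i : Fin n) : ℕ × ZMod p :=
  ((σ.1 i : ℕ) + 1, σ.2 i)

/-- `σ ∈ G_{p,n}` has a d-descent at position `i+1` (positions are `1,…,n`):
for positions `< n` this means `(σ(i),σ_c(i)) > (σ(i+1),σ_c(i+1))`,
and at position `n` it means `σ_c(n) ≠ 0`. -/
def gpnHasDDescentAt {p n : ℕ} (σ : GPN p n) (i : Fin n) : Prop :=
  if h : (i : ℕ) + 1 < n then
    sigmaLt p (gpnPair σ ⟨(i : ℕ) + 1, h⟩) (gpnPair σ i)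
  else σ.2 i ≠ 0

/-- `d(σ)`, the number of d-descents of `σ ∈ G_{p,n}`. -/
def dNum {p n : ℕ} (σ : GPN p n) : ℕ :=
  (Finset.univ.filter fun i : Fin n => gpnHasDDescentAt σ i).card

/-- `Θ_i = Σ_{σ : d(σ⁻¹) = i} σ ∈ ℂ[G_{p,n}]`. -/
def Theta (p n : ℕ) [NeZero p] (i : ℕ) : MonoidAlgebra ℂ (GPN p n) :=
  ∑ σ ∈ Finset.univ.filter fun σ : GPN p n => dNum σ⁻¹ = i, MonoidAlgebra.single σ (1 : ℂ)

/-- `u_{ij} := [x^{n-j}] binom(n + (x-1)/p - i, n)`, the coefficient of `x^{n-j}` in the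
degree-`n` polynomial `(1/n!) ∏_{m=0}^{n-1} (n + (x-1)/p - i - m)`. -/
def uEnt (p n : ℕ) (i j : ℕ) : ℝ :=
  (Polynomial.C ((n.factorial : ℝ))⁻¹ *
    ∏ m ∈ Finset.range n,
      ((Polynomial.X - 1) * Polynomial.C ((p : ℝ))⁻¹ +
        Polynomial.C ((n : ℝ) - (i : ℝ) - (m : ℝ)))).coeff (n - j)

/-- `v_{ij} := [x^j]((1-x)^{n+1} A_{n-i}(x))`, where `A_m(x) = Σ_{k≥0} (pk+1)^m x^k`. -/
def vEnt (p n : ℕ) (i j : ℕ) : ℝ :=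
  PowerSeries.coeff (R := ℝ) j
    ((1 - PowerSeries.X) ^ (n + 1) * PowerSeries.mk fun a => ((p * a + 1 : ℕ) : ℝ) ^ (n - i))

/-- `e_{ℓ-k} := Σ_{i=0}^{ℓ} u_{ik} Θ_i ∈ ℂ[G_{p,n}]` (indexed here by `k`). -/
def eElt (p n : ℕ) [NeZero p] (ℓ k : ℕ) : MonoidAlgebra ℂ (GPN p n) :=
  ∑ i ∈ Finset.range (ℓ + 1), ((uEnt p n i k : ℝ) : ℂ) • Theta p n i

/-- The polynomial `binom(n + (x-1)/p - i, n) = (1/n!) ∏_{m=0}^{n-1} (n + (x-1)/p - i - m)`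
over `ℂ`. -/
def binomPolyC (p n : ℕ) (i : ℕ) : Polynomial ℂ :=
  Polynomial.C ((n.factorial : ℂ))⁻¹ *
    ∏ m ∈ Finset.range n,
      ((Polynomial.X - 1) * Polynomial.C ((p : ℂ))⁻¹ +
        Polynomial.C ((n : ℂ) - (i : ℂ) - (m : ℂ)))

/-- The polynomial `binom(n + (x-1)/p - i, n)` with (scalar) coefficients in `ℂ[G_{p,n}]`. -/
def binomPoly (p n : ℕ) [NeZero p] (i : ℕ) :
    Polynomial (MonoidAlgebra ℂ (GPN p n)) :=
  (binomPolyC p n i).map (algebraMap ℂ (MonoidAlgebra ℂ (GPN p n)))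

/-! The `Θ_i` play no role beyond being elements of a `ℂ`-algebra. Expanding
`Q_i(x) = binom(n + (x-1)/p - i, n)` in powers of `x` gives (1), once one knows that `Q_i` has
degree `≤ n` and, for `p = 1`, vanishes at `x = 0`; so `u` is the coefficient matrix of the `Q_i`.
For (2) it suffices that `v` is a left inverse of `u`. Evaluating at `x = pm + 1` gives
`Σ_k u_{ik} (pm+1)^{n-k} = Q_i(pm+1) = binom(n+m-i, n)`, and the generating function of the
latter in `m` is `x^i / (1-x)^{n+1}`; multiplying by `(1-x)^{n+1}` leaves `x^i`, whose
coefficients are those of the identity matrix. -/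

open Polynomial Finset

theorem Polynomial.eq_sum_range_C_coeff_mul_X_pow_sub {R : Type*} [Semiring R] (P : R[X])
    {n ℓ : ℕ} (hℓ : ℓ ≤ n) (hdeg : P.natDegree ≤ n) (hlow : ∀ d < n - ℓ, P.coeff d = 0) :
    P = ∑ k ∈ range (ℓ + 1), C (P.coeff (n - k)) * X ^ (n - k) := by
  have hfull : P = ∑ k ∈ range (n + 1), C (P.coeff (n - k)) * X ^ (n - k) := by
    conv_lhs => rw [P.as_sum_range' (n + 1) (Nat.lt_succ_of_le hdeg)]
    rw [← sum_range_reflect]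
    refine sum_congr rfl fun d _ => ?_
    rw [C_mul_X_pow_eq_monomial, Nat.add_sub_cancel]
  refine hfull.trans (sum_subset (range_subset_range.2 (by omega)) fun k hk hkℓ => ?_).symm
  rw [hlow _ (by simp at hk hkℓ; omega), C_0, zero_mul]

theorem Polynomial.sum_map_mul_C_eq_sum_X_pow_mul_C {R A ι κ : Type*} [CommSemiring R]
    [Semiring A] [Algebra R A] (s : Finset ι) (t : Finset κ) (P : ι → R[X]) (c : ι → κ → R)
    (e : κ → ℕ) (θ : ι → A) (hP : ∀ i ∈ s, P i = ∑ k ∈ t, C (c i k) * X ^ e k) :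
    ∑ i ∈ s, (P i).map (algebraMap R A) * C (θ i)
      = ∑ k ∈ t, X ^ e k * C (∑ i ∈ s, c i k • θ i) := by
  calc ∑ i ∈ s, (P i).map (algebraMap R A) * C (θ i)
      = ∑ i ∈ s, ∑ k ∈ t, X ^ e k * C (c i k • θ i) := by
        refine sum_congr rfl fun i hi => ?_
        rw [hP i hi, Polynomial.map_sum, sum_mul]
        refine sum_congr rfl fun k _ => ?_
        rw [Algebra.smul_def, C_mul, Polynomial.map_mul, Polynomial.map_pow, map_X, map_C,
          ← (commute_X_pow _ _).eq, mul_assoc]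
    _ = ∑ k ∈ t, X ^ e k * C (∑ i ∈ s, c i k • θ i) := by
        rw [sum_comm]
        simp only [map_sum, mul_sum]

theorem Finset.sum_smul_sum_smul_eq_of_orthogonal {R M ι κ : Type*} [Semiring R]
    [AddCommMonoid M] [Module R M] [DecidableEq ι] {s : Finset ι} (t : Finset κ)
    (u : ι → κ → R) (v : κ → ι → R) (θ : ι → M) {i : ι} (hi : i ∈ s)
    (horth : ∀ j ∈ s, ∑ k ∈ t, v k i * u j k = if i = j then 1 else 0) :
    ∑ k ∈ t, v k i • ∑ j ∈ s, u j k • θ j = θ i := by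
  simp only [smul_sum, smul_smul]
  rw [sum_comm]
  simp only [← sum_smul]
  rw [sum_congr rfl fun j hj => by rw [horth j hj]]
  simp [ite_smul, hi]

theorem PowerSeries.one_sub_X_pow_mul_mk_choose_sub {R : Type*} [CommRing R] {n j : ℕ}
    (hj : j ≤ n) :
    (1 - X) ^ (n + 1) * mk (fun m => ((n + m - j).choose n : R)) = (X : PowerSeries R) ^ j := by
  have hshift : mk (fun m => ((n + m - j).choose n : R))
      = X ^ j * mk fun m => ((n + m).choose n : R) := by
    ext m
    rw [coeff_mk, coeff_X_pow_mul']
    split_ifs with hjm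
    · rw [coeff_mk, show n + m - j = n + (m - j) by omega]
    · rw [Nat.choose_eq_zero_of_lt (by omega), Nat.cast_zero]
  rw [hshift, mul_left_comm, mul_comm _ (mk _), mk_add_choose_mul_one_sub_pow_eq_one, mul_one]

/-- `binomPolyC` over `ℝ`; `uEnt` reads off its coefficients. -/
def binomPolyReal (p n i : ℕ) : ℝ[X] :=
  C ((n.factorial : ℝ))⁻¹ *
    ∏ m ∈ range n, ((X - 1) * C ((p : ℝ))⁻¹ + C ((n : ℝ) - (i : ℝ) - (m : ℝ)))

section BinomPolyReal

variable {p n : ℕ}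

theorem map_binomPolyReal (i : ℕ) :
    (binomPolyReal p n i).map (algebraMap ℝ ℂ) = binomPolyC p n i := by
  simp [binomPolyReal, binomPolyC, Polynomial.map_prod]

theorem natDegree_binomPolyReal_le (i : ℕ) : (binomPolyReal p n i).natDegree ≤ n := by
  refine natDegree_C_mul_le _ _ |>.trans <| (natDegree_prod_le _ _).trans ?_
  refine (sum_le_sum fun m _ => ?_).trans (by simp : ∑ _m ∈ range n, 1 ≤ n)
  refine (natDegree_add_le _ _).trans (max_le ?_ ((natDegree_C _).trans_le zero_le_one))
  refine natDegree_mul_C_le _ _ |>.trans ?_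
  rw [← C_1, natDegree_X_sub_C]

theorem eval_binomPolyReal (hp : p ≠ 0) {i : ℕ} (hi : i ≤ n) (m : ℕ) :
    (binomPolyReal p n i).eval ((p * m + 1 : ℕ) : ℝ) = (n + m - i).choose n := by
  have hfactor : ∀ t : ℕ, (((p * m + 1 : ℕ) : ℝ) - 1) * (p : ℝ)⁻¹ + ((n : ℝ) - i - t)
      = ((n + m - i : ℕ) : ℝ) - t := by
    intro t
    rw [Nat.cast_sub (by omega)]
    push_cast
    field_simp
    ring
  simp only [binomPolyReal, eval_mul, eval_C, eval_prod, eval_add, eval_sub, eval_one, eval_X,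
    hfactor, ← descPochhammer_eval_eq_prod_range, descPochhammer_eval_eq_descFactorial,
    Nat.descFactorial_eq_factorial_mul_choose, Nat.cast_mul]
  rw [← mul_assoc, inv_mul_cancel₀ (by positivity), one_mul]

theorem coeff_zero_binomPolyReal_one {i : ℕ} (hi : i < n) :
    (binomPolyReal 1 n i).coeff 0 = 0 := by
  rw [coeff_zero_eq_eval_zero]
  simp only [binomPolyReal, eval_mul, eval_C, eval_prod, eval_add, eval_sub, eval_one, eval_X]
  refine mul_eq_zero_of_right _ (prod_eq_zero (mem_range.2 (by omega : n - 1 - i < n)) ?_)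
  rw [Nat.cast_sub (by omega), Nat.cast_sub (by omega)]
  simp

variable {ℓ : ℕ} (hℓ : ℓ = if p = 1 then n - 1 else n)
include hℓ

theorem binomPolyReal_eq_sum_uEnt {i : ℕ} (hi : i ≤ ℓ) :
    binomPolyReal p n i = ∑ k ∈ range (ℓ + 1), C (uEnt p n i k) * X ^ (n - k) := by
  refine eq_sum_range_C_coeff_mul_X_pow_sub _ (by split_ifs at hℓ <;> omega)
    (natDegree_binomPolyReal_le i) fun d hd => ?_
  split_ifs at hℓ with hp
  · subst hp
    rw [show d = 0 by omega]
    exact coeff_zero_binomPolyReal_one (by omega)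
  · omega

theorem sum_uEnt_mul_pow_eq_choose [NeZero p] {i : ℕ} (hi : i ≤ ℓ) (m : ℕ) :
    ∑ k ∈ range (ℓ + 1), uEnt p n i k * ((p * m + 1 : ℕ) : ℝ) ^ (n - k)
      = (n + m - i).choose n := by
  rw [← eval_binomPolyReal (NeZero.ne p) (by split_ifs at hℓ <;> omega),
    binomPolyReal_eq_sum_uEnt hℓ hi]
  simp [eval_finsetSum]

theorem sum_vEnt_mul_uEnt [NeZero p] (i : ℕ) {j : ℕ} (hj : j ≤ ℓ) :
    ∑ k ∈ range (ℓ + 1), vEnt p n k i * uEnt p n j k = if i = j then 1 else 0 := by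
  have hA : ∑ k ∈ range (ℓ + 1), PowerSeries.C (uEnt p n j k) *
        PowerSeries.mk (fun m => ((p * m + 1 : ℕ) : ℝ) ^ (n - k))
      = PowerSeries.mk fun m => ((n + m - j).choose n : ℝ) := by
    ext m
    simp only [map_sum, PowerSeries.coeff_C_mul, PowerSeries.coeff_mk]
    exact sum_uEnt_mul_pow_eq_choose hℓ hj m
  calc ∑ k ∈ range (ℓ + 1), vEnt p n k i * uEnt p n j k
      = PowerSeries.coeff i ((1 - PowerSeries.X) ^ (n + 1) *
          ∑ k ∈ range (ℓ + 1), PowerSeries.C (uEnt p n j k) *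
            PowerSeries.mk (fun m => ((p * m + 1 : ℕ) : ℝ) ^ (n - k))) := by
        simp only [vEnt, mul_sum, map_sum, mul_left_comm _ (PowerSeries.C _),
          PowerSeries.coeff_C_mul, mul_comm (uEnt p n j _)]
    _ = if i = j then 1 else 0 := by
        rw [hA, PowerSeries.one_sub_X_pow_mul_mk_choose_sub (by split_ifs at hℓ <;> omega),
          PowerSeries.coeff_X_pow]

end BinomPolyReal

theorem statement15_general (p n : ℕ) [NeZero p]
    (ℓ : ℕ) (hℓ : ℓ = if p = 1 then n - 1 else n) :
    (∑ i ∈ Finset.range (ℓ + 1), binomPoly p n i * Polynomial.C (Theta p n i)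
        = ∑ k ∈ Finset.range (ℓ + 1),
            Polynomial.X ^ (n - k) * Polynomial.C (eElt p n ℓ k))
      ∧ (∀ i ∈ Finset.range (ℓ + 1),
          Theta p n i
            = ∑ k ∈ Finset.range (ℓ + 1), ((vEnt p n k i : ℝ) : ℂ) • eElt p n ℓ k) := by
  constructor
  · refine sum_map_mul_C_eq_sum_X_pow_mul_C _ _ _ _ _ _ fun i hi => ?_
    rw [← map_binomPolyReal, binomPolyReal_eq_sum_uEnt hℓ (mem_range_succ_iff.1 hi)]
    simp [Polynomial.map_sum]
  · intro i hi
    refine (sum_smul_sum_smul_eq_of_orthogonal _ (fun j k => (uEnt p n j k : ℂ))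
      (fun k j => (vEnt p n k j : ℂ)) (Theta p n) hi fun j hj => ?_).symm
    simpa [apply_ite Complex.ofReal] using
      congrArg Complex.ofReal (sum_vEnt_mul_uEnt hℓ i (mem_range_succ_iff.1 hj))

/-- **Proposition.** (1) `Σ_{i=0}^{ℓ} binom(n + (x-1)/p - i, n) Θ_i = Σ_{k=0}^{ℓ} x^{n-k} e_{ℓ-k}`
as polynomials in `x` with coefficients in `ℂ[G_{p,n}]`, where `e_{ℓ-k} = Σ_i u_{ik} Θ_i`;
(2) `Θ_i = Σ_{k=0}^{ℓ} v_{ki} e_{ℓ-k}`. -/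
theorem statement15 (p n : ℕ) [NeZero p] (hn : 1 ≤ n)
    (ℓ : ℕ) (hℓ : ℓ = if p = 1 then n - 1 else n) :
    (∑ i ∈ Finset.range (ℓ + 1), binomPoly p n i * Polynomial.C (Theta p n i)
        = ∑ k ∈ Finset.range (ℓ + 1),
            Polynomial.X ^ (n - k) * Polynomial.C (eElt p n ℓ k))
      ∧ (∀ i ∈ Finset.range (ℓ + 1),
          Theta p n i
            = ∑ k ∈ Finset.range (ℓ + 1), ((vEnt p n k i : ℝ) : ℂ) • eElt p n ℓ k) :=
  statement15_general p n ℓ hℓ
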